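/- arXiv:2407.14942 — 3 statements merged into one kernel-verified Lean document; each statement's English description precedes it below -/
import Mathlib

section
/- Weak transference: let (r,c) be a δ-tame m×n margin with MLE (α,β), let X be distributed as the base product measure μ^{⊗m×n} conditioned on the event 𝒯_ρ(r,c) (which has positive finite base measure), and let Y have independent entries Y_{ij} ∼ μ_{α(i)+β(j)}. Then there is a constant C₁ = C₁(μ,δ) such that for every Borel set ℰ ⊆ ℝ^{m×n}: P(X ∈ ℰ) ≤ exp(C₁ρ)·P(Y ∈ 𝒯_ρ(r,c))^{-1}·P(Y ∈ ℰ). -/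
open MeasureTheory ProbabilityTheory Real Set ENNReal

/-!
With `θᵢⱼ = αᵢ + βⱼ`, the law of `Y` has density `exp g` with respect to `μ^{⊗m×n}`, where
`g x = ∑ᵢⱼ (θᵢⱼ xᵢⱼ - ψ θᵢⱼ)`. Let `y = ψ'(θ)` be the mean matrix of `Y`; its margins are
`(r, c)`, and `g x - g y = ∑ᵢⱼ θᵢⱼ (xᵢⱼ - yᵢⱼ)`. The row and column sums of `x - y` have the
same total, so `β_{j₀}` may be moved from `β` to `α`, which bounds `g x - g y` on `𝒯_ρ(r,c)`
by `3Kρ` as soon as `|θᵢⱼ| ≤ K`. The density of `Y` thus varies by a factor at most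
`exp (6Kρ)` on `𝒯_ρ(r,c)`, and comparing it with its value at `y` gives the inequality.

The bound `K` comes from tameness: `ψ = cgf` has `ψ'' ≥ 0` (a variance), so `ψ'` is monotone,
and `ψ' θ ∈ [A_δ, B_δ]` traps `θ` between `φ u` and `φ v` for fixed means
`A < u < A_δ` and `B_δ < v < B`.
-/

theorem lintegral_fin_nat_prod_eq_prod {n : ℕ} {E : Fin n → Type*} [∀ i, MeasurableSpace (E i)]
    {μ : ∀ i, Measure (E i)} [∀ i, SigmaFinite (μ i)] {f : ∀ i, E i → ℝ≥0∞}
    (hf : ∀ i, Measurable (f i)) :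
    ∫⁻ x, ∏ i, f i (x i) ∂Measure.pi μ = ∏ i, ∫⁻ x, f i x ∂μ i := by
  induction n with
  | zero => simp
  | succ n ih =>
    calc _ = ∫⁻ x : E 0 × ((i : Fin n) → E i.succ), f 0 x.1 * ∏ i : Fin n, f i.succ (x.2 i)
            ∂(μ 0).prod (Measure.pi fun i => μ i.succ) := by
          rw [← ((measurePreserving_piFinSuccAbove μ 0).symm).lintegral_comp_emb
            (MeasurableEquiv.measurableEmbedding _)]
          congr 1 with x
          simp_rw [MeasurableEquiv.piFinSuccAbove_symm_apply, Fin.insertNthEquiv,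
            Fin.prod_univ_succ, Fin.insertNth_zero]
          simp [Fin.zero_succAbove]
          rfl
      _ = (∫⁻ x, f 0 x ∂μ 0) * ∏ i : Fin n, ∫⁻ x, f i.succ x ∂μ i.succ := by
          rw [← ih fun i => hf i.succ, ← lintegral_prod_mul (hf 0).aemeasurable
            (Finset.measurable_prod _ fun i _ =>
              (hf i.succ).comp (measurable_pi_apply i)).aemeasurable]
      _ = _ := (Fin.prod_univ_succ fun i => ∫⁻ x, f i x ∂μ i).symm

theorem lintegral_fintype_prod_eq_prod {ι : Type*} [Fintype ι] {E : ι → Type*}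
    [∀ i, MeasurableSpace (E i)] {μ : ∀ i, Measure (E i)} [∀ i, SigmaFinite (μ i)]
    {f : ∀ i, E i → ℝ≥0∞} (hf : ∀ i, Measurable (f i)) :
    ∫⁻ x, ∏ i, f i (x i) ∂Measure.pi μ = ∏ i, ∫⁻ x, f i x ∂μ i := by
  let e := (Fintype.equivFin ι).symm
  rw [← (measurePreserving_piCongrLeft _ e).lintegral_comp_emb
    (MeasurableEquiv.measurableEmbedding _)]
  simp_rw [← e.prod_comp, MeasurableEquiv.coe_piCongrLeft, Equiv.piCongrLeft_apply_apply]
  exact lintegral_fin_nat_prod_eq_prod fun i => hf (e i)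

theorem pi_withDensity {ι : Type*} [Fintype ι] {E : ι → Type*} [∀ i, MeasurableSpace (E i)]
    {μ : ∀ i, Measure (E i)} [∀ i, SigmaFinite (μ i)] {f : ∀ i, E i → ℝ≥0∞}
    (hf : ∀ i, Measurable (f i)) [∀ i, SigmaFinite ((μ i).withDensity (f i))] :
    Measure.pi (fun i => (μ i).withDensity (f i))
      = (Measure.pi μ).withDensity fun x => ∏ i, f i (x i) := by
  classical
  refine Measure.pi_eq fun s hs => ?_
  rw [withDensity_apply _ (.univ_pi hs), ← lintegral_indicator (.univ_pi hs)]
  have hind : (Set.pi univ s).indicator (fun x => ∏ i, f i (x i))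
      = fun x => ∏ i, (s i).indicator (f i) (x i) := by
    ext x
    simp [Set.indicator, Finset.prod_ite_zero]
  rw [hind, lintegral_fintype_prod_eq_prod fun i => (hf i).indicator (hs i)]
  simp_rw [lintegral_indicator (hs _), withDensity_apply _ (hs _)]

theorem pi_withDensity_ofReal_exp {ι : Type*} [Fintype ι] {E : ι → Type*}
    [∀ i, MeasurableSpace (E i)] {μ : ∀ i, Measure (E i)} [∀ i, SigmaFinite (μ i)]
    {f : ∀ i, E i → ℝ} (hf : ∀ i, Measurable (f i)) :
    Measure.pi (fun i => (μ i).withDensity fun x => ENNReal.ofReal (exp (f i x)))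
      = (Measure.pi μ).withDensity fun x => ENNReal.ofReal (exp (∑ i, f i (x i))) := by
  rw [pi_withDensity fun i => by fun_prop]
  simp_rw [exp_sum, ENNReal.ofReal_prod_of_nonneg fun i _ => (exp_pos _).le]

theorem measure_inter_div_le_exp_mul_withDensity {X : Type*} [MeasurableSpace X]
    {μ : Measure X} [SFinite μ] {g : X → ℝ} (hg : Measurable g) {T : Set X} {L c : ℝ}
    (hgT : ∀ x ∈ T, |g x - L| ≤ c) (E : Set X) :
    μ (E ∩ T) / μ T ≤ ENNReal.ofReal (exp (2 * c))
      * ((μ.withDensity fun x => ENNReal.ofReal (exp (g x))) T)⁻¹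
      * μ.withDensity (fun x => ENNReal.ofReal (exp (g x))) E := by
  set ν := μ.withDensity fun x => ENNReal.ofReal (exp (g x))
  have hνT : ν T ≤ ENNReal.ofReal (exp (L + c)) * μ T := by
    rw [withDensity_apply', ← setLIntegral_const]
    refine setLIntegral_mono measurable_const fun x hx => ofReal_le_ofReal (exp_le_exp.2 ?_)
    linarith [(abs_le.1 (hgT x hx)).2]
  have hνE : ENNReal.ofReal (exp (L - c)) * μ (E ∩ T) ≤ ν E :=
    calc _ = ∫⁻ _ in E ∩ T, ENNReal.ofReal (exp (L - c)) ∂μ := (setLIntegral_const _ _).symm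
      _ ≤ ∫⁻ x in E ∩ T, ENNReal.ofReal (exp (g x)) ∂μ :=
          setLIntegral_mono (by fun_prop) fun x hx =>
            ofReal_le_ofReal (exp_le_exp.2 (by linarith [(abs_le.1 (hgT x hx.2)).1]))
      _ ≤ ν (E ∩ T) := withDensity_apply_le _ _
      _ ≤ ν E := measure_mono inter_subset_left
  have hexp : ENNReal.ofReal (exp (2 * c)) * ENNReal.ofReal (exp (L - c))
      = ENNReal.ofReal (exp (L + c)) := by
    rw [← ofReal_mul (exp_pos _).le, ← exp_add]; ring_nf
  have hpos : ENNReal.ofReal (exp (L + c)) ≠ 0 := (ofReal_pos.2 (exp_pos _)).ne'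
  calc μ (E ∩ T) / μ T
      = ENNReal.ofReal (exp (L + c)) * (ENNReal.ofReal (exp (L + c)))⁻¹ * (μ T)⁻¹ * μ (E ∩ T) := by
        rw [ENNReal.mul_inv_cancel hpos ofReal_ne_top, one_mul, div_eq_mul_inv, mul_comm]
    _ = ENNReal.ofReal (exp (2 * c)) * (ENNReal.ofReal (exp (L + c)) * μ T)⁻¹
          * (ENNReal.ofReal (exp (L - c)) * μ (E ∩ T)) := by
        rw [ENNReal.mul_inv (Or.inl hpos) (Or.inl ofReal_ne_top), ← hexp]; ring
    _ ≤ ENNReal.ofReal (exp (2 * c)) * (ν T)⁻¹ * ν E := by gcongr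

theorem abs_sum_mul_le_of_abs_le {σ : Type*} [Fintype σ] {a : σ → ℝ} {M : ℝ}
    (ha : ∀ s, |a s| ≤ M) (u : σ → ℝ) : |∑ s, a s * u s| ≤ M * ∑ s, |u s| := by
  rw [Finset.mul_sum]
  refine (Finset.abs_sum_le_sum_abs _ _).trans (Finset.sum_le_sum fun s _ => ?_)
  rw [abs_mul]
  exact mul_le_mul_of_nonneg_right (ha s) (abs_nonneg _)

theorem abs_sum_add_mul_le {ι κ : Type*} [Fintype ι] [Fintype κ] {α : ι → ℝ} {β : κ → ℝ}
    {K : ℝ} (hK : ∀ i j, |α i + β j| ≤ K) (z : ι × κ → ℝ) :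
    |∑ p, (α p.1 + β p.2) * z p|
      ≤ K * ∑ i, |∑ j, z (i, j)| + 2 * K * ∑ j, |∑ i, z (i, j)| := by
  rcases isEmpty_or_nonempty ι with hι | ⟨⟨i₀⟩⟩
  · simp
  rcases isEmpty_or_nonempty κ with hκ | ⟨⟨j₀⟩⟩
  · simp
  have hshift : ∑ p, (α p.1 + β p.2) * z p
      = ∑ i, (α i + β j₀) * ∑ j, z (i, j) + ∑ j, (β j - β j₀) * ∑ i, z (i, j) := by
    simp_rw [Fintype.sum_prod_type, Finset.mul_sum]
    rw [Finset.sum_comm (f := fun j i => (β j - β j₀) * z (i, j)), ← Finset.sum_add_distrib]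
    refine Finset.sum_congr rfl fun i _ => ?_
    rw [← Finset.sum_add_distrib]
    exact Finset.sum_congr rfl fun j _ => by ring
  have hβ : ∀ j, |β j - β j₀| ≤ 2 * K := fun j => by
    calc |β j - β j₀| = |(α i₀ + β j) - (α i₀ + β j₀)| := by ring_nf
      _ ≤ |α i₀ + β j| + |α i₀ + β j₀| := abs_sub _ _
      _ ≤ 2 * K := by linarith [hK i₀ j, hK i₀ j₀]
  rw [hshift]
  exact (abs_add_le _ _).trans (add_le_add (abs_sum_mul_le_of_abs_le (fun i => hK i j₀) _)
    (abs_sum_mul_le_of_abs_le hβ _))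

theorem abs_sum_add_mul_sub_le_of_margins {ι κ : Type*} [Fintype ι] [Fintype κ] {α : ι → ℝ}
    {β : κ → ℝ} {K : ℝ} (hK₀ : 0 ≤ K) (hK : ∀ i j, |α i + β j| ≤ K) {y : ι × κ → ℝ}
    {r : ι → ℝ} {c : κ → ℝ} (hr : ∀ i, ∑ j, y (i, j) = r i) (hc : ∀ j, ∑ i, y (i, j) = c j)
    {x : ι × κ → ℝ} {ρ : ℝ} (hxr : ∑ i, |∑ j, x (i, j) - r i| ≤ ρ)
    (hxc : ∑ j, |∑ i, x (i, j) - c j| ≤ ρ) :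
    |∑ p, (α p.1 + β p.2) * (x p - y p)| ≤ 3 * K * ρ := by
  calc |∑ p, (α p.1 + β p.2) * (x p - y p)|
      ≤ K * ∑ i, |∑ j, x (i, j) - r i| + 2 * K * ∑ j, |∑ i, x (i, j) - c j| := by
        simpa only [Pi.sub_apply, Finset.sum_sub_distrib, hr, hc] using
          abs_sum_add_mul_le hK (x - y)
    _ ≤ K * ρ + 2 * K * ρ := by gcongr
    _ = 3 * K * ρ := by ring

theorem setOf_lintegral_exp_mul_lt_top_eq_integrableExpSet {Ω : Type*} [MeasurableSpace Ω]
    {X : Ω → ℝ} (hX : Measurable X) (μ : Measure Ω) :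
    {t : ℝ | ∫⁻ ω, ENNReal.ofReal (exp (t * X ω)) ∂μ < ⊤} = integrableExpSet X μ := by
  ext t
  rw [Set.mem_ofPred_eq, lt_top_iff_ne_top,
    lintegral_ofReal_ne_top_iff_integrable (by fun_prop) (ae_of_all _ fun _ => (exp_pos _).le)]
  rfl

theorem monotoneOn_deriv_cgf {Ω : Type*} [MeasurableSpace Ω] {X : Ω → ℝ} {μ : Measure Ω} :
    MonotoneOn (deriv (cgf X μ)) (interior (integrableExpSet X μ)) := by
  have hconv : Convex ℝ (interior (integrableExpSet X μ)) := convex_integrableExpSet.interior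
  have hd := (analyticOnNhd_cgf (X := X) (μ := μ)).deriv
  refine monotoneOn_of_deriv_nonneg hconv hd.continuousOn ?_ fun v hv => ?_
  · exact hd.differentiableOn.mono interior_subset
  rw [interior_interior] at hv
  have h2 := iteratedDeriv_two_cgf_eq_integral hv
  rw [iteratedDeriv_succ, iteratedDeriv_one] at h2
  rw [h2]
  exact div_nonneg (integral_nonneg fun ω => by positivity) mgf_nonneg

theorem MonotoneOn.abs_le_of_apply_mem_Icc {f : ℝ → ℝ} {s : Set ℝ} (hf : MonotoneOn f s)
    {x₁ x₂ a b : ℝ} (hx₁ : x₁ ∈ s) (hx₂ : x₂ ∈ s) (h₁ : f x₁ < a) (h₂ : b < f x₂)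
    {x : ℝ} (hx : x ∈ s) (hfx : f x ∈ Icc a b) : |x| ≤ |x₁| + |x₂| := by
  have hx₁x := hf.reflect_lt hx₁ hx (h₁.trans_le hfx.1)
  have hxx₂ := hf.reflect_lt hx hx₂ (hfx.2.trans_lt h₂)
  rw [abs_le]
  constructor <;> linarith [neg_abs_le x₁, le_abs_self x₂, abs_nonneg x₁, abs_nonneg x₂]

theorem EReal.lt_coe_of_eq_max_add {A : EReal} {a δ t : ℝ} (hδ : 0 < δ)
    (h : (a : EReal) = max (A + δ) t) : A < a := by
  induction A using EReal.rec with
  | bot => exact EReal.bot_lt_coe a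
  | coe x => exact h ▸ lt_max_of_lt_left (by exact_mod_cast lt_add_of_pos_right x hδ)
  | top => simp at h

theorem EReal.coe_lt_of_eq_min_sub {B : EReal} {b δ t : ℝ} (hδ : 0 < δ)
    (h : (b : EReal) = min (B - δ) t) : b < B := by
  induction B using EReal.rec with
  | bot => simp at h
  | coe x => exact h ▸ min_lt_of_left_lt (by exact_mod_cast sub_lt_self x hδ)
  | top => exact EReal.coe_lt_top b

theorem exists_abs_le_of_deriv_cgf_mem_Icc {Ω : Type*} [MeasurableSpace Ω] {X : Ω → ℝ}
    {μ : Measure Ω} {A B : EReal} {S : Set ℝ} (hS : S = {x : ℝ | A < x ∧ x < B})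
    {φ : ℝ → ℝ}
    (hφ : ∀ x ∈ S, φ x ∈ interior (integrableExpSet X μ) ∧ deriv (cgf X μ) (φ x) = x)
    (hφinv : ∀ θ ∈ interior (integrableExpSet X μ), deriv (cgf X μ) θ ∈ S)
    {a b : ℝ} (ha : A < a) (hb : b < B) :
    ∃ K, 0 < K ∧ ∀ θ ∈ interior (integrableExpSet X μ), deriv (cgf X μ) θ ∈ Icc a b → |θ| ≤ K := by
  subst hS
  obtain ⟨u, hAu, hua⟩ := EReal.exists_between_coe_real ha
  obtain ⟨v, hbv, hvB⟩ := EReal.exists_between_coe_real hb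
  refine ⟨|φ u| + |φ v| + 1, by positivity, fun θ hθ hθab => ?_⟩
  obtain ⟨hAθ, hθB⟩ := hφinv θ hθ
  have hu := hφ u ⟨hAu, (hua.trans_le (EReal.coe_le_coe_iff.2 hθab.1)).trans hθB⟩
  have hv := hφ v ⟨hAθ.trans_le (EReal.coe_le_coe_iff.2 hθab.2) |>.trans hbv, hvB⟩
  have := monotoneOn_deriv_cgf.abs_le_of_apply_mem_Icc hu.1 hv.1
    (hu.2.trans_lt (EReal.coe_lt_coe_iff.1 hua)) (hv.2.symm ▸ EReal.coe_lt_coe_iff.1 hbv) hθ hθab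
  linarith

/-- Weak transference principle: for a δ-tame margin (r,c) with MLE (α,β), if X is the
base product measure conditioned on the approximate-margin event 𝒯_ρ(r,c) and Y is the
product of tilted measures μ_{α(i)+β(j)}, then for some constant C₁ = C₁(μ,δ) > 0 and
every Borel set ℰ, P(X ∈ ℰ) ≤ exp(C₁ρ)·P(Y ∈ 𝒯_ρ(r,c))⁻¹·P(Y ∈ ℰ). -/
theorem weak_transference (μ : Measure ℝ) [SigmaFinite μ] (δ : ℝ) (hδ : 0 < δ)
    (Θ : Set ℝ)
    (hΘ : Θ = {θ : ℝ | ∫⁻ x, ENNReal.ofReal (Real.exp (θ * x)) ∂μ < ⊤})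
    (ψ : ℝ → ℝ) (hψ : ∀ θ, ψ θ = Real.log (∫ x, Real.exp (θ * x) ∂μ))
    (A B : EReal) (S : Set ℝ)
    (hS : S = {x : ℝ | A < (x : EReal) ∧ (x : EReal) < B})
    (φ : ℝ → ℝ)
    (hφ : ∀ x ∈ S, φ x ∈ interior Θ ∧ deriv ψ (φ x) = x)
    (hφinv : ∀ θ ∈ interior Θ, deriv ψ θ ∈ S ∧ φ (deriv ψ θ) = θ)
    (Aδ Bδ : ℝ)
    (hAδ : (Aδ : EReal) = max (A + (δ : EReal)) ((-(1/δ) : ℝ) : EReal))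
    (hBδ : (Bδ : EReal) = min (B - (δ : EReal)) (((1/δ) : ℝ) : EReal))
    (tilt : ℝ → Measure ℝ)
    (htilt : ∀ θ, tilt θ =
      μ.withDensity fun x => ENNReal.ofReal (Real.exp (θ * x - ψ θ))) :
    ∃ C₁ : ℝ, 0 < C₁ ∧
      ∀ (m n : ℕ) (r : Fin m → ℝ) (c : Fin n → ℝ) (ρ : ℝ)
        (α : Fin m → ℝ) (β : Fin n → ℝ),
        (∀ i j, α i + β j ∈ interior Θ) →
        (∀ i, ∑ j, deriv ψ (α i + β j) = r i) →
        (∀ j, ∑ i, deriv ψ (α i + β j) = c j) →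
        (∀ i j, Aδ ≤ deriv ψ (α i + β j) ∧ deriv ψ (α i + β j) ≤ Bδ) →
        ∀ Tρ : Set ((Fin m × Fin n) → ℝ),
          Tρ = {x | (∑ i, |(∑ j, x (i, j)) - r i|) ≤ ρ ∧
                    (∑ j, |(∑ i, x (i, j)) - c j|) ≤ ρ} →
          0 < Measure.pi (fun _ : Fin m × Fin n => μ) Tρ →
          Measure.pi (fun _ : Fin m × Fin n => μ) Tρ < ⊤ →
          ∀ E : Set ((Fin m × Fin n) → ℝ), MeasurableSet E →
            Measure.pi (fun _ : Fin m × Fin n => μ) (E ∩ Tρ)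
                / Measure.pi (fun _ : Fin m × Fin n => μ) Tρ
              ≤ ENNReal.ofReal (Real.exp (C₁ * ρ)) *
                (Measure.pi (fun p : Fin m × Fin n => tilt (α p.1 + β p.2)) Tρ)⁻¹ *
                Measure.pi (fun p : Fin m × Fin n => tilt (α p.1 + β p.2)) E := by
  obtain rfl : ψ = cgf id μ := funext hψ
  obtain rfl : Θ = integrableExpSet id μ :=
    hΘ.trans (setOf_lintegral_exp_mul_lt_top_eq_integrableExpSet measurable_id μ)
  obtain ⟨K, hK, hθK⟩ := exists_abs_le_of_deriv_cgf_mem_Icc hS hφ (fun θ hθ => (hφinv θ hθ).1)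
    (EReal.lt_coe_of_eq_max_add hδ hAδ) (EReal.coe_lt_of_eq_min_sub hδ hBδ)
  refine ⟨6 * K, by positivity, ?_⟩
  intro m n r c ρ α β hmem hr hc htame Tρ hTρ _ _ E _
  set y : Fin m × Fin n → ℝ := fun p => deriv (cgf id μ) (α p.1 + β p.2)
  set g : (Fin m × Fin n → ℝ) → ℝ :=
    fun x => ∑ p, ((α p.1 + β p.2) * x p - cgf id μ (α p.1 + β p.2))
  have hY : Measure.pi (fun p : Fin m × Fin n => tilt (α p.1 + β p.2))
      = (Measure.pi fun _ => μ).withDensity fun x => ENNReal.ofReal (exp (g x)) := by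
    simp_rw [htilt]
    exact pi_withDensity_ofReal_exp fun p => by fun_prop
  have hosc : ∀ x ∈ Tρ, |g x - g y| ≤ 3 * K * ρ := by
    intro x hx
    obtain ⟨hxr, hxc⟩ := hTρ ▸ hx
    simp only [g, ← Finset.sum_sub_distrib, sub_sub_sub_cancel_right, ← mul_sub]
    exact abs_sum_add_mul_sub_le_of_margins hK.le (fun i j => hθK _ (hmem i j) (htame i j))
      hr hc hxr hxc
  rw [hY]
  exact (measure_inter_div_le_exp_mul_withDensity (by fun_prop) hosc E).trans_eq (by ring_nf)
end

section
/- Cloned margins inherit MLEs: if (r₀,c₀) is an a×b margin with MLE (α₀,β₀), then the k-cloning (r,c) defined by r = k·r₀ ⊗ 1_k and c = k·c₀ ⊗ 1_k (an ka × kb margin) has MLE (α₀ ⊗ 1_k, β₀ ⊗ 1_k). Consequently, if (r₀,c₀) is δ-tame, then all its k-clonings are δ-tame. -/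
open MeasureTheory Real Set

/-- Cloned margins inherit MLEs: if (α₀,β₀) is an MLE for an a×b margin (r₀,c₀), then
the k-cloned dual pair (α₀⊗1_k, β₀⊗1_k) is an MLE for the ka×kb cloned margin
(k·r₀⊗1_k, k·c₀⊗1_k); consequently δ-tameness is inherited by all k-clonings. -/
theorem cloned_margin_MLE (μ : Measure ℝ) [SigmaFinite μ]
    (Θ : Set ℝ)
    (hΘ : Θ = {θ : ℝ | ∫⁻ x, ENNReal.ofReal (Real.exp (θ * x)) ∂μ < ⊤})
    (ψ : ℝ → ℝ) (hψ : ∀ θ, ψ θ = Real.log (∫ x, Real.exp (θ * x) ∂μ))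
    (a b k : ℕ) (r₀ : Fin a → ℝ) (c₀ : Fin b → ℝ)
    (α₀ : Fin a → ℝ) (β₀ : Fin b → ℝ)
    (hdom : ∀ i j, α₀ i + β₀ j ∈ interior Θ)
    (hmr : ∀ i, ∑ j, deriv ψ (α₀ i + β₀ j) = r₀ i)
    (hmc : ∀ j, ∑ i, deriv ψ (α₀ i + β₀ j) = c₀ j) :
    (∀ p : Fin a × Fin k,
      ∑ q : Fin b × Fin k, deriv ψ (α₀ p.1 + β₀ q.1) = k * r₀ p.1) ∧
    (∀ q : Fin b × Fin k,
      ∑ p : Fin a × Fin k, deriv ψ (α₀ p.1 + β₀ q.1) = k * c₀ q.1) ∧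
    (∀ Aδ Bδ : ℝ,
      (∀ i j, Aδ ≤ deriv ψ (α₀ i + β₀ j) ∧ deriv ψ (α₀ i + β₀ j) ≤ Bδ) →
      ∀ (p : Fin a × Fin k) (q : Fin b × Fin k),
        Aδ ≤ deriv ψ (α₀ p.1 + β₀ q.1) ∧ deriv ψ (α₀ p.1 + β₀ q.1) ≤ Bδ) := by
  refine ⟨fun p => ?_, fun q => ?_, fun Aδ Bδ h p q => h p.1 q.1⟩
  · rw [Fintype.sum_prod_type]
    simp [Finset.sum_const, ← hmr p.1, Finset.mul_sum, mul_comm]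
  · rw [Fintype.sum_prod_type]
    simp [Finset.sum_const, ← hmc q.1, Finset.mul_sum, mul_comm]
end

section
/- The cut norm of the step kernel of a matrix is attained on grid rectangles: for any A ∈ ℝ^{m×n} with associated step kernel W_A on [0,1]² (constant A_{ij} on the (i,j)-th grid rectangle of the m×n partition), mn·‖W_A‖_□ = max over x ∈ {0,1}^m, y ∈ {0,1}^n of |xᵀ A y|, where ‖W‖_□ = sup over measurable S,T ⊆ [0,1] of |∫_{S×T} W dx dy|. -/
/-!
On the grid rectangle `Iᵢ × Jⱼ` the kernel is the constant `Aᵢⱼ`, so for measurable `S, T` the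
integral of `W` over `S × T` is `sᵀ A t / (m n)`, where `sᵢ = m |S ∩ Iᵢ|` and `tⱼ = n |T ∩ Jⱼ|` lie
in `[0, 1]`. A bilinear form on the cube `[0,1]ᵐ × [0,1]ⁿ` is affine in each variable, hence is
maximized (and, applied to `-A`, minimized) at a vertex; every vertex is realized by taking `S`
and `T` to be unions of grid cells.
-/

open MeasureTheory Real Set Matrix

section Cube

variable {ι κ : Type*} [Fintype ι] [Fintype κ]

def boolVec (x : ι → Bool) : ι → ℝ := fun i => if x i then 1 else 0

lemma exists_dotProduct_boolVec_ge (c s : ι → ℝ) (hs : ∀ i, s i ∈ Icc (0 : ℝ) 1) :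
    ∃ x : ι → Bool, c ⬝ᵥ s ≤ c ⬝ᵥ boolVec x := by
  refine ⟨fun i => decide (0 ≤ c i), Finset.sum_le_sum fun i _ => ?_⟩
  obtain ⟨hs0, hs1⟩ := hs i
  by_cases hc : 0 ≤ c i
  · simpa [boolVec, hc] using mul_le_of_le_one_right hc hs1
  · simpa [boolVec, hc] using mul_nonpos_of_nonpos_of_nonneg (le_of_not_ge hc) hs0

lemma exists_dotProduct_mulVec_boolVec_ge (A : Matrix ι κ ℝ) {s : ι → ℝ} {t : κ → ℝ}
    (hs : ∀ i, s i ∈ Icc (0 : ℝ) 1) (ht : ∀ j, t j ∈ Icc (0 : ℝ) 1) :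
    ∃ x y, s ⬝ᵥ A *ᵥ t ≤ boolVec x ⬝ᵥ A *ᵥ boolVec y := by
  obtain ⟨y, hy⟩ := exists_dotProduct_boolVec_ge (s ᵥ* A) t ht
  obtain ⟨x, hx⟩ := exists_dotProduct_boolVec_ge (A *ᵥ boolVec y) s hs
  refine ⟨x, y, ?_⟩
  calc s ⬝ᵥ A *ᵥ t = s ᵥ* A ⬝ᵥ t := dotProduct_mulVec _ _ _
    _ ≤ s ᵥ* A ⬝ᵥ boolVec y := hy
    _ = A *ᵥ boolVec y ⬝ᵥ s := by rw [← dotProduct_mulVec, dotProduct_comm]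
    _ ≤ A *ᵥ boolVec y ⬝ᵥ boolVec x := hx
    _ = boolVec x ⬝ᵥ A *ᵥ boolVec y := dotProduct_comm _ _

lemma abs_dotProduct_mulVec_le_iSup_boolVec (A : Matrix ι κ ℝ) {s : ι → ℝ} {t : κ → ℝ}
    (hs : ∀ i, s i ∈ Icc (0 : ℝ) 1) (ht : ∀ j, t j ∈ Icc (0 : ℝ) 1) :
    |s ⬝ᵥ A *ᵥ t| ≤ ⨆ p : (ι → Bool) × (κ → Bool), |boolVec p.1 ⬝ᵥ A *ᵥ boolVec p.2| := by
  have vertex_le (x y) : |boolVec x ⬝ᵥ A *ᵥ boolVec y| ≤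
      ⨆ p : (ι → Bool) × (κ → Bool), |boolVec p.1 ⬝ᵥ A *ᵥ boolVec p.2| :=
    le_ciSup (f := fun p : (ι → Bool) × (κ → Bool) => |boolVec p.1 ⬝ᵥ A *ᵥ boolVec p.2|)
      (Set.finite_range _).bddAbove (x, y)
  obtain ⟨x, y, hxy⟩ := exists_dotProduct_mulVec_boolVec_ge A hs ht
  obtain ⟨x', y', hxy'⟩ := exists_dotProduct_mulVec_boolVec_ge (-A) hs ht
  simp only [neg_mulVec, dotProduct_neg, neg_le_neg_iff] at hxy'
  rw [abs_le]
  constructor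
  · linarith [neg_le_abs (boolVec x' ⬝ᵥ A *ᵥ boolVec y'), vertex_le x' y']
  · linarith [le_abs_self (boolVec x ⬝ᵥ A *ᵥ boolVec y), vertex_le x y]

lemma sum_sum_mul_eq_dotProduct_mulVec {R : Type*} [NonUnitalSemiring R] (A : Matrix ι κ R)
    (s : ι → R) (t : κ → R) : ∑ i, ∑ j, s i * A i j * t j = s ⬝ᵥ A *ᵥ t := by
  simp only [dotProduct, mulVec, Finset.mul_sum, mul_assoc]

end Cube

section Grid

-- The paper's `I_{i+1}`: cells are indexed from `0`, as `Fin m` is.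
def gridCell (m i : ℕ) : Set ℝ := Ioc (i / m) ((i + 1) / m)

lemma measurableSet_gridCell (m i : ℕ) : MeasurableSet (gridCell m i) := measurableSet_Ioc

lemma pairwise_disjoint_gridCell (m : ℕ) : Pairwise (Function.onFun Disjoint (gridCell m)) := by
  have hmono : Monotone fun i : ℕ => (i : ℝ) / m := fun _ _ hij =>
    div_le_div_of_nonneg_right (by exact_mod_cast hij) m.cast_nonneg
  exact fun i j hij => by
    simpa [gridCell, Function.onFun] using hmono.pairwise_disjoint_on_Ioc_succ hij

lemma gridCell_subset_Icc {m i : ℕ} (hi : i < m) : gridCell m i ⊆ Icc 0 1 := by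
  have hi' : (i : ℝ) + 1 ≤ m := by exact_mod_cast hi
  exact Ioc_subset_Icc_self.trans
    (Icc_subset_Icc (by positivity) (div_le_one_of_le₀ hi' (by positivity)))

lemma volume_real_gridCell (m i : ℕ) : volume.real (gridCell m i) = (m : ℝ)⁻¹ := by
  rw [gridCell, Real.volume_real_Ioc_of_le (by gcongr; linarith)]
  ring

lemma volume_real_inter_gridCell_le (S : Set ℝ) (m i : ℕ) :
    volume.real (S ∩ gridCell m i) ≤ (m : ℝ)⁻¹ :=
  (measureReal_mono inter_subset_right (by simp [gridCell])).trans_eq (volume_real_gridCell m i)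

def gridUnion {m : ℕ} (x : Fin m → Bool) : Set ℝ := ⋃ (i : Fin m) (_ : x i), gridCell m i

lemma gridUnion_inter_gridCell {m : ℕ} (x : Fin m → Bool) (i : Fin m) :
    gridUnion x ∩ gridCell m i = if x i then gridCell m i else ∅ := by
  split_ifs with hx
  · exact inter_eq_self_of_subset_right (subset_iUnion₂_of_subset i hx subset_rfl)
  · refine disjoint_iff_inter_eq_empty.mp (disjoint_iUnion₂_left.mpr fun k hk => ?_)
    exact pairwise_disjoint_gridCell m (Fin.val_injective.ne fun h : k = i => hx (h ▸ hk))

lemma measurableSet_gridUnion {m : ℕ} (x : Fin m → Bool) : MeasurableSet (gridUnion x) :=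
  .iUnion fun i => .iUnion fun _ => measurableSet_gridCell m i

lemma gridUnion_subset_Icc {m : ℕ} (x : Fin m → Bool) : gridUnion x ⊆ Icc 0 1 :=
  iUnion₂_subset fun i _ => gridCell_subset_Icc i.isLt

end Grid

section IteratedIntegral

variable {α β ι κ : Type*} [MeasurableSpace α] [MeasurableSpace β] [Fintype ι] [Fintype κ]
  {μ : Measure α} {ν : Measure β}

lemma setIntegral_sum_mul_indicator_one (c : ι → ℝ) {J : ι → Set β}
    (hJ : ∀ k, MeasurableSet (J k)) {T : Set β} (hT : ν T ≠ ⊤) :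
    ∫ y in T, ∑ k, c k * (J k).indicator 1 y ∂ν = ∑ k, c k * ν.real (T ∩ J k) := by
  have hint (k : ι) : IntegrableOn ((J k).indicator 1) T ν :=
    (integrableOn_const (C := (1 : ℝ)) hT).indicator (hJ k)
  rw [integral_finsetSum _ fun k _ => (hint k).const_mul (c k)]
  simp only [integral_const_mul, integral_indicator_one (hJ _), measureReal_restrict_apply (hJ _),
    inter_comm]

lemma setIntegral_setIntegral_sum_mul_indicator_prod (A : ι → κ → ℝ) {I : ι → Set α}
    {J : κ → Set β} (hI : ∀ i, MeasurableSet (I i)) (hJ : ∀ j, MeasurableSet (J j))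
    {S : Set α} {T : Set β} (hS : μ S ≠ ⊤) (hT : ν T ≠ ⊤) :
    ∫ x in S, ∫ y in T, ∑ i, ∑ j, A i j * ((I i).indicator 1 x * (J j).indicator 1 y) ∂ν ∂μ =
      ∑ i, ∑ j, A i j * (μ.real (S ∩ I i) * ν.real (T ∩ J j)) := by
  simp_rw [← mul_assoc, ← Fintype.sum_prod_type']
  simp_rw [setIntegral_sum_mul_indicator_one (fun p : ι × κ => A p.1 p.2 * (I p.1).indicator 1 _)
    (fun p => hJ p.2) hT, mul_right_comm _ ((I _).indicator 1 _)]
  rw [setIntegral_sum_mul_indicator_one (J := fun p : ι × κ => I p.1) _ (fun p => hI p.1) hS]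
  simp_rw [mul_right_comm]

end IteratedIntegral

section StepKernel

noncomputable def stepKernel {m n : ℕ} (A : Matrix (Fin m) (Fin n) ℝ) (x y : ℝ) : ℝ :=
  ∑ i : Fin m, ∑ j : Fin n,
    if ((i : ℝ) / m < x ∧ x ≤ ((i : ℝ) + 1) / m ∧ (j : ℝ) / n < y ∧ y ≤ ((j : ℝ) + 1) / n)
    then A i j else 0

lemma stepKernel_eq_sum_mul_indicator {m n : ℕ} (A : Matrix (Fin m) (Fin n) ℝ) (x y : ℝ) :
    stepKernel A x y =
      ∑ i, ∑ j, A i j * ((gridCell m i).indicator 1 x * (gridCell n j).indicator 1 y) := by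
  refine Finset.sum_congr rfl fun i _ => Finset.sum_congr rfl fun j _ => ?_
  by_cases hx : x ∈ gridCell m i <;> by_cases hy : y ∈ gridCell n j <;>
    simp_all [gridCell]

noncomputable def cellFraction (m : ℕ) (S : Set ℝ) (i : Fin m) : ℝ :=
  m * volume.real (S ∩ gridCell m i)

lemma cellFraction_mem_Icc (m : ℕ) (S : Set ℝ) (i : Fin m) : cellFraction m S i ∈ Icc 0 1 := by
  have hm : (0 : ℝ) < m := by exact_mod_cast i.pos
  refine ⟨by unfold cellFraction; positivity, ?_⟩
  calc cellFraction m S i ≤ m * (m : ℝ)⁻¹ := by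
        unfold cellFraction; gcongr; exact volume_real_inter_gridCell_le S m i
    _ = 1 := mul_inv_cancel₀ hm.ne'

lemma cellFraction_gridUnion {m : ℕ} (x : Fin m → Bool) :
    cellFraction m (gridUnion x) = boolVec x := by
  ext i
  have hm : (m : ℝ) ≠ 0 := by exact_mod_cast i.pos.ne'
  rw [cellFraction, gridUnion_inter_gridCell, boolVec]
  split_ifs
  · rw [volume_real_gridCell, mul_inv_cancel₀ hm]
  · simp

lemma setIntegral_setIntegral_stepKernel {m n : ℕ} (A : Matrix (Fin m) (Fin n) ℝ) {S T : Set ℝ}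
    (hS : volume S ≠ ⊤) (hT : volume T ≠ ⊤) :
    ∫ x in S, ∫ y in T, stepKernel A x y =
      cellFraction m S ⬝ᵥ A *ᵥ cellFraction n T / (m * n) := by
  simp_rw [stepKernel_eq_sum_mul_indicator]
  rw [setIntegral_setIntegral_sum_mul_indicator_prod A (measurableSet_gridCell m ·)
    (measurableSet_gridCell n ·) hS hT, ← sum_sum_mul_eq_dotProduct_mulVec, Finset.sum_div]
  refine Finset.sum_congr rfl fun i _ => ?_
  rw [Finset.sum_div]
  refine Finset.sum_congr rfl fun j _ => ?_
  have hm : (m : ℝ) ≠ 0 := by exact_mod_cast i.pos.ne'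
  have hn : (n : ℝ) ≠ 0 := by exact_mod_cast j.pos.ne'
  rw [cellFraction, cellFraction]
  field_simp

end StepKernel

/-- The cut norm of the step kernel of a matrix is attained on grid rectangles:
mn·‖W_A‖_□ equals the maximum of |xᵀAy| over 0/1-vectors x ∈ {0,1}^m, y ∈ {0,1}^n. -/
theorem cut_norm_step_kernel (m n : ℕ) (hm : 0 < m) (hn : 0 < n)
    (A : Matrix (Fin m) (Fin n) ℝ)
    (W : ℝ → ℝ → ℝ)
    (hW : ∀ x y : ℝ, W x y = ∑ i : Fin m, ∑ j : Fin n,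
      if ((i : ℝ) / m < x ∧ x ≤ ((i : ℝ) + 1) / m ∧
          (j : ℝ) / n < y ∧ y ≤ ((j : ℝ) + 1) / n) then A i j else 0) :
    (m * n : ℝ) *
      sSup {v : ℝ | ∃ S T : Set ℝ, MeasurableSet S ∧ MeasurableSet T ∧
        S ⊆ Set.Icc (0 : ℝ) 1 ∧ T ⊆ Set.Icc (0 : ℝ) 1 ∧
        v = |∫ x in S, ∫ y in T, W x y|}
    = ⨆ p : (Fin m → Bool) × (Fin n → Bool),
        |∑ i, ∑ j, (if p.1 i then (1 : ℝ) else 0) * A i j *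
          (if p.2 j then (1 : ℝ) else 0)| := by
  obtain rfl : W = stepKernel A := funext₂ hW
  have hmn : (0 : ℝ) < m * n := by positivity
  have finite_of_subset {S : Set ℝ} (hS : S ⊆ Icc 0 1) : volume S ≠ ⊤ :=
    measure_ne_top_of_subset hS measure_Icc_lt_top.ne
  simp_rw [sum_sum_mul_eq_dotProduct_mulVec]
  change _ = ⨆ p : (Fin m → Bool) × (Fin n → Bool), |boolVec p.1 ⬝ᵥ A *ᵥ boolVec p.2|
  obtain ⟨p, hp⟩ := exists_eq_ciSup_of_finite
    (f := fun p : (Fin m → Bool) × (Fin n → Bool) => |boolVec p.1 ⬝ᵥ A *ᵥ boolVec p.2|)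
  suffices h : IsGreatest _ (|boolVec p.1 ⬝ᵥ A *ᵥ boolVec p.2| / (m * n)) by
    rw [h.csSup_eq, ← hp]
    field_simp
  refine ⟨⟨gridUnion p.1, gridUnion p.2, measurableSet_gridUnion _, measurableSet_gridUnion _,
    gridUnion_subset_Icc _, gridUnion_subset_Icc _, ?_⟩, ?_⟩
  · rw [setIntegral_setIntegral_stepKernel A (finite_of_subset (gridUnion_subset_Icc _))
      (finite_of_subset (gridUnion_subset_Icc _)), cellFraction_gridUnion, cellFraction_gridUnion,
      abs_div, abs_of_pos hmn]
  · rintro v ⟨S, T, -, -, hS, hT, rfl⟩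
    rw [setIntegral_setIntegral_stepKernel A (finite_of_subset hS) (finite_of_subset hT), abs_div,
      abs_of_pos hmn, hp]
    gcongr
    exact abs_dotProduct_mulVec_le_iSup_boolVec A (cellFraction_mem_Icc m S)
      (cellFraction_mem_Icc n T)
end
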